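/- arXiv:1810.11371 — 2 statements merged into one kernel-verified Lean document; each statement's English description precedes it below -/
import Mathlib

section
/- Let q : [0, ∞) → ℝ be continuously differentiable with q(0) = 0, and let τ* > 0 be such that q'(t) > 0 for t ∈ [0, τ*) and |q'(τ* - δ)| > |q'(τ* + δ)| for all δ ∈ (0, τ*]. Then q(2τ*) > 0. -/
open Set

/-- Mean value theorem applied to `δ ↦ f (c + δ) - f (c - δ)`, whose derivative is
`f' (c + δ) + f' (c - δ)`. -/
theorem lt_of_symmetric_deriv_sum_pos {f f' : ℝ → ℝ} {c r : ℝ} (hr : 0 < r)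
    (hf : ContinuousOn f (Icc (c - r) (c + r)))
    (hf' : ∀ x ∈ Ioo (c - r) (c + r), HasDerivAt f (f' x) x)
    (hsum : ∀ δ ∈ Ioo 0 r, 0 < f' (c - δ) + f' (c + δ)) :
    f (c - r) < f (c + r) := by
  set g : ℝ → ℝ := fun δ ↦ f (c + δ) - f (c - δ) with hg
  have hg_cont : ContinuousOn g (Icc 0 r) := by
    refine (hf.comp (continuous_const_add c).continuousOn ?_).sub
      (hf.comp (continuous_const.sub continuous_id).continuousOn ?_) <;>
    · intro δ hδ
      constructor <;> linarith [hδ.1, hδ.2]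
  have hg_deriv : ∀ δ ∈ Ioo 0 r, HasDerivAt g (f' (c + δ) + f' (c - δ)) δ := by
    intro δ hδ
    have hplus := (hf' (c + δ) ⟨by linarith [hδ.1], by linarith [hδ.2]⟩).comp_const_add c δ
    have hminus := (hf' (c - δ) ⟨by linarith [hδ.2], by linarith [hδ.1]⟩).comp_const_sub c δ
    rw [← sub_neg_eq_add]
    exact hplus.sub hminus
  obtain ⟨ξ, hξ, hslope⟩ := exists_hasDerivAt_eq_slope g _ hr hg_cont hg_deriv
  have hslope_pos : 0 < (g r - g 0) / (r - 0) := hslope ▸ by linarith [hsum ξ hξ]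
  rw [div_pos_iff_of_pos_right (by linarith)] at hslope_pos
  simp only [hg, add_zero, sub_zero, sub_self] at hslope_pos
  linarith

theorem q_positive_at_twice_critical_time_general (q q' : ℝ → ℝ) (τs : ℝ)
    (hτs : 0 < τs)
    (hderiv : ∀ t ∈ Set.Ici (0 : ℝ), HasDerivWithinAt q (q' t) (Set.Ici 0) t)
    (hq0 : q 0 = 0)
    (hpos : ∀ t ∈ Set.Ico (0 : ℝ) τs, 0 < q' t)
    (hcmp : ∀ δ ∈ Set.Ioc (0 : ℝ) τs, |q' (τs - δ)| > |q' (τs + δ)|) :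
    0 < q (2 * τs) := by
  have hcont : ContinuousOn q (Icc (τs - τs) (τs + τs)) := fun t ht ↦
    (hderiv t (mem_Ici.mpr (by linarith [ht.1]))).continuousWithinAt.mono fun x hx ↦ by
      simp only [mem_Ici]; linarith [hx.1]
  have hderivAt : ∀ t ∈ Ioo (τs - τs) (τs + τs), HasDerivAt q (q' t) t := fun t ht ↦
    (hderiv t (mem_Ici.mpr (by linarith [ht.1]))).hasDerivAt (Ici_mem_nhds (by linarith [ht.1]))
  have hsum : ∀ δ ∈ Ioo 0 τs, 0 < q' (τs - δ) + q' (τs + δ) := by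
    intro δ hδ
    have hleft := hpos (τs - δ) ⟨by linarith [hδ.2], by linarith [hδ.1]⟩
    have hdom := hcmp δ ⟨hδ.1, hδ.2.le⟩
    rw [abs_of_pos hleft] at hdom
    linarith [neg_abs_le (q' (τs + δ))]
  simpa [hq0, two_mul] using lt_of_symmetric_deriv_sum_pos hτs hcont hderivAt hsum

theorem q_positive_at_twice_critical_time (q q' : ℝ → ℝ) (τs : ℝ)
    (hτs : 0 < τs)
    (hderiv : ∀ t ∈ Set.Ici (0 : ℝ), HasDerivWithinAt q (q' t) (Set.Ici 0) t)
    (hcont : ContinuousOn q' (Set.Ici 0))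
    (hq0 : q 0 = 0)
    (hpos : ∀ t ∈ Set.Ico (0 : ℝ) τs, 0 < q' t)
    (hcmp : ∀ δ ∈ Set.Ioc (0 : ℝ) τs, |q' (τs - δ)| > |q' (τs + δ)|) :
    0 < q (2 * τs) :=
  q_positive_at_twice_critical_time_general q q' τs hτs hderiv hq0 hpos hcmp
end

section
/- Let σ, ω, ν₀ > 0 and μ₁ > 0, and suppose t > 0 is the smallest positive solution of ν₀·cos(ωt) + μ₁·sin(ωt) = ν₀·e^{σt}. Then t < π/ω - (1/ω)·arcsin(ν₀/√(ν₀² + μ₁²)) < π/ω. -/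
/-!
Writing `ν₀ cos x + μ₁ sin x = R sin (x + φ)` with `R = √(ν₀² + μ₁²)` and `φ = arcsin (ν₀ / R)`,
the first crossing `t` must have phase `ωt + φ < π`. Otherwise the phase passes through `π/2`,
where the sinusoid is `R ≥ ν₀ e^{σt} > ν₀ e^{σs}`, and then through `π`, where it vanishes below
the positive exponential; the intermediate value theorem yields an earlier crossing.
-/

open Real Set

theorem mul_cos_add_mul_sin_eq_sqrt_mul_sin (a b x : ℝ) (hb : 0 ≤ b) :
    a * cos x + b * sin x =
      √(a ^ 2 + b ^ 2) * sin (x + arcsin (a / √(a ^ 2 + b ^ 2))) := by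
  rcases (Real.sqrt_nonneg (a ^ 2 + b ^ 2)).eq_or_lt with hR | hR
  · have hR2 : a ^ 2 + b ^ 2 ≤ 0 := Real.sqrt_eq_zero'.mp hR.symm
    have ha : a = 0 := by nlinarith
    have hb' : b = 0 := by nlinarith
    simp [ha, hb']
  set R := √(a ^ 2 + b ^ 2)
  have hR2 : R ^ 2 = a ^ 2 + b ^ 2 := Real.sq_sqrt (by positivity)
  have haR : |a / R| ≤ 1 := by
    rw [abs_div, abs_of_pos hR, div_le_one hR]
    exact Real.abs_le_sqrt (by nlinarith)
  have hsin : sin (arcsin (a / R)) = a / R := sin_arcsin (abs_le.mp haR).1 (abs_le.mp haR).2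
  have hcos : cos (arcsin (a / R)) = b / R := by
    rw [cos_arcsin, show 1 - (a / R) ^ 2 = (b / R) ^ 2 by field_simp; linarith]
    exact Real.sqrt_sq (by positivity)
  rw [sin_add, hsin, hcos]
  field_simp
  ring

theorem mul_add_lt_pi_of_first_crossing {R ω φ t : ℝ} {h : ℝ → ℝ} (hR : 0 < R) (hω : 0 < ω)
    (hφ : φ < π / 2) (hcont : Continuous h) (hpos : ∀ s, 0 < h s) (hmono : StrictMono h)
    (heq : R * sin (ω * t + φ) = h t)
    (hmin : ∀ s ∈ Ioo 0 t, R * sin (ω * s + φ) ≠ h s) :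
    ω * t + φ < π := by
  by_contra! hge
  have hsin_pos : 0 < sin (ω * t + φ) := pos_of_mul_pos_right (heq ▸ hpos t) hR.le
  have hgt : π < ω * t + φ := by
    refine hge.lt_of_ne fun hπ => ?_
    rw [← hπ, sin_pi] at hsin_pos
    exact hsin_pos.false
  set s₁ := (π / 2 - φ) / ω
  set s₂ := (π - φ) / ω
  have hs₁ : ω * s₁ + φ = π / 2 := by rw [mul_div_cancel₀ _ hω.ne', sub_add_cancel]
  have hs₂ : ω * s₂ + φ = π := by rw [mul_div_cancel₀ _ hω.ne', sub_add_cancel]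
  have hs₁_pos : 0 < s₁ := div_pos (by linarith) hω
  have hs₁s₂ : s₁ < s₂ := div_lt_div_of_pos_right (by linarith [pi_pos]) hω
  have hs₂t : s₂ < t := by nlinarith
  let g : ℝ → ℝ := fun s => R * sin (ω * s + φ) - h s
  have hg₁ : 0 < g s₁ := by
    have : h s₁ < R := calc
      h s₁ < h t := hmono (hs₁s₂.trans hs₂t)
      _ = R * sin (ω * t + φ) := heq.symm
      _ ≤ R := mul_le_of_le_one_right hR.le (sin_le_one _)
    simp only [g, hs₁, sin_pi_div_two, mul_one]
    linarith
  have hg₂ : g s₂ < 0 := by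
    simp only [g, hs₂, sin_pi, mul_zero, zero_sub, neg_neg_iff_pos]
    exact hpos s₂
  have hg : ContinuousOn g (Icc s₁ s₂) := by fun_prop
  obtain ⟨s, hs, hgs⟩ := intermediate_value_Ioo' hs₁s₂.le hg ⟨hg₂, hg₁⟩
  exact hmin s ⟨hs₁_pos.trans hs.1, hs.2.trans hs₂t⟩ (sub_eq_zero.mp hgs)

theorem first_exit_time_bound_general (σ ω ν₀ μ₁ t : ℝ)
    (hσ : 0 < σ) (hω : 0 < ω) (hν : 0 < ν₀) (hμ : 0 < μ₁)
    (heq : ν₀ * Real.cos (ω * t) + μ₁ * Real.sin (ω * t) = ν₀ * Real.exp (σ * t))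
    (hmin : ∀ s ∈ Set.Ioo (0 : ℝ) t,
      ν₀ * Real.cos (ω * s) + μ₁ * Real.sin (ω * s) ≠ ν₀ * Real.exp (σ * s)) :
    t < Real.pi / ω - Real.arcsin (ν₀ / Real.sqrt (ν₀^2 + μ₁^2)) / ω ∧
    Real.pi / ω - Real.arcsin (ν₀ / Real.sqrt (ν₀^2 + μ₁^2)) / ω < Real.pi / ω := by
  set R := √(ν₀ ^ 2 + μ₁ ^ 2)
  set φ := arcsin (ν₀ / R)
  have hR : 0 < R := Real.sqrt_pos.mpr (by positivity)
  have hνR : ν₀ / R < 1 := by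
    rw [div_lt_one hR]
    exact Real.lt_sqrt_of_sq_lt (by nlinarith)
  have hphase (x : ℝ) := mul_cos_add_mul_sin_eq_sqrt_mul_sin ν₀ μ₁ x hμ.le
  have hexp : StrictMono fun s => ν₀ * exp (σ * s) :=
    fun a b hab => mul_lt_mul_of_pos_left (exp_lt_exp.mpr (mul_lt_mul_of_pos_left hab hσ)) hν
  have hlt : ω * t + φ < π :=
    mul_add_lt_pi_of_first_crossing hR hω (arcsin_lt_pi_div_two.mpr hνR) (by fun_prop)
      (fun s => by positivity) hexp (hphase _ ▸ heq) fun s hs => hphase _ ▸ hmin s hs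
  have hφ : 0 < φ := arcsin_pos.mpr (div_pos hν hR)
  rw [div_sub_div_same, lt_div_iff₀ hω]
  exact ⟨by linarith, div_lt_div_of_pos_right (by linarith) hω⟩

theorem first_exit_time_bound (σ ω ν₀ μ₁ t : ℝ)
    (hσ : 0 < σ) (hω : 0 < ω) (hν : 0 < ν₀) (hμ : 0 < μ₁)
    (ht : 0 < t)
    (heq : ν₀ * Real.cos (ω * t) + μ₁ * Real.sin (ω * t) = ν₀ * Real.exp (σ * t))
    (hmin : ∀ s ∈ Set.Ioo (0 : ℝ) t,
      ν₀ * Real.cos (ω * s) + μ₁ * Real.sin (ω * s) ≠ ν₀ * Real.exp (σ * s)) :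
    t < Real.pi / ω - Real.arcsin (ν₀ / Real.sqrt (ν₀^2 + μ₁^2)) / ω ∧
    Real.pi / ω - Real.arcsin (ν₀ / Real.sqrt (ν₀^2 + μ₁^2)) / ω < Real.pi / ω :=
  first_exit_time_bound_general σ ω ν₀ μ₁ t hσ hω hν hμ heq hmin
end
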